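/- Let n be a positive integer, let Π be an n × n complex Hermitian positive semidefinite matrix, and let s ≥ 0. Suppose that for every unit vector χ : Fin n → ℝ with χ(i) ≥ 0 for all i, one has ⟨χ, Π χ⟩ ≤ s. Then for every unit vector φ : Fin n → ℂ, ⟨φ, Π φ⟩ ≤ 4s (the quadratic form being real since Π is Hermitian). -/

import Mathlib

/-! For positive semidefinite `P`, the form `q v = Re (star v ⬝ᵥ P *ᵥ v)` is nonnegative, so the
parallelogram law gives `q (u ± v) ≤ 2 (q u + q v)`; it is also homogeneous, `q (c • v) = ‖c‖² q v`.
Homogeneity turns the hypothesis into `q χ ≤ s ‖χ‖²` for every nonnegative real `χ`. Writing a real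
vector as the difference of its positive and negative parts, and a complex vector as `x + I • y`
with `x`, `y` real, each costs a factor `2`, so `q φ ≤ 4 s ‖φ‖²`. -/

open Matrix ComplexOrder

lemma posPart_sq_add_negPart_sq {α : Type*} [Ring α] [LinearOrder α] [IsOrderedRing α] (a : α) :
    a⁺ ^ 2 + a⁻ ^ 2 = a ^ 2 := by
  rcases le_total 0 a with h | h <;> simp [h]

namespace Matrix

variable {ι : Type*} [Fintype ι]

lemma dotProduct_mulVec_add_add_dotProduct_mulVec_sub {R : Type*} [Ring R] [StarRing R]
    (P : Matrix ι ι R) (u v : ι → R) :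
    star (u + v) ⬝ᵥ P *ᵥ (u + v) + star (u - v) ⬝ᵥ P *ᵥ (u - v) =
      2 * (star u ⬝ᵥ P *ᵥ u + star v ⬝ᵥ P *ᵥ v) := by
  simp only [star_add, star_sub, mulVec_add, mulVec_sub, add_dotProduct, sub_dotProduct,
    dotProduct_add, dotProduct_sub, two_mul]
  abel

lemma dotProduct_mulVec_smul_smul {R : Type*} [CommSemiring R] [StarRing R]
    (P : Matrix ι ι R) (c : R) (v : ι → R) :
    star (c • v) ⬝ᵥ P *ᵥ (c • v) = star c * c * (star v ⬝ᵥ P *ᵥ v) := by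
  rw [star_smul, mulVec_smul, smul_dotProduct, dotProduct_smul, smul_eq_mul, smul_eq_mul]
  ring

section RCLike

open RCLike

variable {𝕜 : Type*} [RCLike 𝕜]

lemma re_dotProduct_mulVec_smul_smul (P : Matrix ι ι 𝕜) (c : 𝕜) (v : ι → 𝕜) :
    re (star (c • v) ⬝ᵥ P *ᵥ (c • v)) = ‖c‖ ^ 2 * re (star v ⬝ᵥ P *ᵥ v) := by
  rw [dotProduct_mulVec_smul_smul, star_def, RCLike.conj_mul, ← ofReal_pow, re_ofReal_mul]

variable {P : Matrix ι ι 𝕜}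

lemma PosSemidef.re_dotProduct_mulVec_add_le (hP : P.PosSemidef) (u v : ι → 𝕜) :
    re (star (u + v) ⬝ᵥ P *ᵥ (u + v)) ≤
      2 * (re (star u ⬝ᵥ P *ᵥ u) + re (star v ⬝ᵥ P *ᵥ v)) := by
  have hpar := congrArg re (P.dotProduct_mulVec_add_add_dotProduct_mulVec_sub u v)
  have hsub := (nonneg_iff.mp (hP.dotProduct_mulVec_nonneg (u - v))).1
  simp only [map_add, ofNat_mul_re] at hpar
  linarith

lemma PosSemidef.re_dotProduct_mulVec_sub_le (hP : P.PosSemidef) (u v : ι → 𝕜) :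
    re (star (u - v) ⬝ᵥ P *ᵥ (u - v)) ≤
      2 * (re (star u ⬝ᵥ P *ᵥ u) + re (star v ⬝ᵥ P *ᵥ v)) := by
  have hpar := congrArg re (P.dotProduct_mulVec_add_add_dotProduct_mulVec_sub u v)
  have hadd := (nonneg_iff.mp (hP.dotProduct_mulVec_nonneg (u + v))).1
  simp only [map_add, ofNat_mul_re] at hpar
  linarith

end RCLike

variable {P : Matrix ι ι ℂ}

lemma re_dotProduct_mulVec_ofReal_le_of_unit_nonneg {s : ℝ}
    (hbound : ∀ χ : ι → ℝ, (∀ i, 0 ≤ χ i) → ∑ i, χ i ^ 2 = 1 →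
      (star (fun i => (χ i : ℂ)) ⬝ᵥ P *ᵥ (fun i => (χ i : ℂ))).re ≤ s)
    (χ : ι → ℝ) (hχ : ∀ i, 0 ≤ χ i) :
    (star (fun i => (χ i : ℂ)) ⬝ᵥ P *ᵥ (fun i => (χ i : ℂ))).re ≤ s * ∑ i, χ i ^ 2 := by
  obtain hzero | hpos := (Finset.sum_nonneg fun i _ => sq_nonneg (χ i)).eq_or_lt
  · have hχ0 : (fun i => (χ i : ℂ)) = 0 := by
      ext i
      simpa using (Finset.sum_eq_zero_iff_of_nonneg fun i _ => sq_nonneg (χ i)).mp hzero.symm i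
        (Finset.mem_univ i)
    simp [hχ0, ← hzero]
  obtain ⟨r, hr, hrsq⟩ : ∃ r : ℝ, 0 < r ∧ r ^ 2 = ∑ i, χ i ^ 2 :=
    ⟨_, Real.sqrt_pos.mpr hpos, Real.sq_sqrt hpos.le⟩
  have hunit : ∑ i, (χ i / r) ^ 2 = 1 := by
    simp only [div_pow, ← Finset.sum_div, ← hrsq]
    exact div_self (pow_pos hr 2).ne'
  have hscale : (fun i => (χ i : ℂ)) = (r : ℂ) • fun i => ((χ i / r : ℝ) : ℂ) := by
    ext i
    simp [mul_div_cancel₀ _ (Complex.ofReal_ne_zero.mpr hr.ne')]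
  rw [hscale, ← RCLike.re_to_complex, re_dotProduct_mulVec_smul_smul, Complex.norm_real,
    Real.norm_of_nonneg hr.le, hrsq, mul_comm s]
  exact mul_le_mul_of_nonneg_left (hbound _ (fun i => div_nonneg (hχ i) hr.le) hunit) hpos.le

lemma PosSemidef.re_dotProduct_mulVec_ofReal_le_two_mul (hP : P.PosSemidef) {c : ℝ}
    (hnonneg : ∀ χ : ι → ℝ, (∀ i, 0 ≤ χ i) →
      (star (fun i => (χ i : ℂ)) ⬝ᵥ P *ᵥ (fun i => (χ i : ℂ))).re ≤ c * ∑ i, χ i ^ 2)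
    (x : ι → ℝ) :
    (star (fun i => (x i : ℂ)) ⬝ᵥ P *ᵥ (fun i => (x i : ℂ))).re ≤ 2 * c * ∑ i, x i ^ 2 := by
  have hsplit : (fun i => (x i : ℂ)) = (fun i => (x⁺ i : ℂ)) - fun i => (x⁻ i : ℂ) := by
    ext i
    simp only [Pi.sub_apply, ← Complex.ofReal_sub]
    rw [← Pi.sub_apply, posPart_sub_negPart]
  have hsq : ∑ i, x i ^ 2 = ∑ i, x⁺ i ^ 2 + ∑ i, x⁻ i ^ 2 := by
    simp only [← Finset.sum_add_distrib]
    exact Finset.sum_congr rfl fun i _ => (posPart_sq_add_negPart_sq (x i)).symm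
  rw [hsplit, hsq]
  calc _ ≤ 2 * ((star (fun i => (x⁺ i : ℂ)) ⬝ᵥ P *ᵥ (fun i => (x⁺ i : ℂ))).re +
          (star (fun i => (x⁻ i : ℂ)) ⬝ᵥ P *ᵥ (fun i => (x⁻ i : ℂ))).re) :=
        hP.re_dotProduct_mulVec_sub_le _ _
    _ ≤ 2 * (c * ∑ i, x⁺ i ^ 2 + c * ∑ i, x⁻ i ^ 2) := by
        gcongr
        exacts [hnonneg _ fun i => posPart_nonneg (x i), hnonneg _ fun i => negPart_nonneg (x i)]
    _ = _ := by ring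

lemma PosSemidef.re_dotProduct_mulVec_le_two_mul (hP : P.PosSemidef) {c : ℝ}
    (hreal : ∀ x : ι → ℝ,
      (star (fun i => (x i : ℂ)) ⬝ᵥ P *ᵥ (fun i => (x i : ℂ))).re ≤ c * ∑ i, x i ^ 2)
    (φ : ι → ℂ) :
    (star φ ⬝ᵥ P *ᵥ φ).re ≤ 2 * c * ∑ i, ‖φ i‖ ^ 2 := by
  set x : ι → ℝ := fun i => (φ i).re
  set y : ι → ℝ := fun i => (φ i).im
  have hsplit : φ = (fun i => (x i : ℂ)) + Complex.I • fun i => (y i : ℂ) := by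
    ext i
    simp [x, y, mul_comm Complex.I, Complex.re_add_im]
  have hsq : ∑ i, ‖φ i‖ ^ 2 = ∑ i, x i ^ 2 + ∑ i, y i ^ 2 := by
    rw [← Finset.sum_add_distrib]
    exact Finset.sum_congr rfl fun i _ => by
      simp only [x, y, Complex.sq_norm, Complex.normSq_apply]
      ring
  have hI : (star (Complex.I • fun i => (y i : ℂ)) ⬝ᵥ P *ᵥ (Complex.I • fun i => (y i : ℂ))).re =
      (star (fun i => (y i : ℂ)) ⬝ᵥ P *ᵥ (fun i => (y i : ℂ))).re := by
    simpa using P.re_dotProduct_mulVec_smul_smul Complex.I fun i => (y i : ℂ)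
  rw [hsq]
  calc (star φ ⬝ᵥ P *ᵥ φ).re
      ≤ 2 * ((star (fun i => (x i : ℂ)) ⬝ᵥ P *ᵥ (fun i => (x i : ℂ))).re +
          (star (fun i => (y i : ℂ)) ⬝ᵥ P *ᵥ (fun i => (y i : ℂ))).re) := by
        conv_lhs => rw [hsplit]
        rw [← hI]
        exact hP.re_dotProduct_mulVec_add_le _ _
    _ ≤ 2 * (c * ∑ i, x i ^ 2 + c * ∑ i, y i ^ 2) := by
        gcongr <;> apply hreal
    _ = _ := by ring

end Matrix

theorem complex_amplitude_soundness_general (n : ℕ)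
    (P : Matrix (Fin n) (Fin n) ℂ)
    (hPSD : P.PosSemidef)
    (s : ℝ)
    (hbound : ∀ χ : Fin n → ℝ, (∀ i, 0 ≤ χ i) → ∑ i, (χ i) ^ 2 = 1 →
      (star (fun i => (χ i : ℂ)) ⬝ᵥ P.mulVec (fun i => (χ i : ℂ))).re ≤ s) :
    ∀ φ : Fin n → ℂ, ∑ i, ‖φ i‖ ^ 2 = 1 →
      (star φ ⬝ᵥ P.mulVec φ).re ≤ 4 * s := by
  intro φ hφ
  have hnonneg := Matrix.re_dotProduct_mulVec_ofReal_le_of_unit_nonneg hbound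
  have hreal := hPSD.re_dotProduct_mulVec_ofReal_le_two_mul hnonneg
  have hcomplex := hPSD.re_dotProduct_mulVec_le_two_mul hreal φ
  rw [hφ] at hcomplex
  linarith

/-- **Complex-amplitude soundness** (Proposition `QMA⁺_{c,s} ⊆ QMA_{c,4s}`).
If a Hermitian positive semidefinite matrix `P` accepts every real nonnegative
unit vector with probability at most `s`, then it accepts every complex unit
vector with probability at most `4s`. -/
theorem complex_amplitude_soundness (n : ℕ) (hn : 0 < n)
    (P : Matrix (Fin n) (Fin n) ℂ)
    (hHerm : P.IsHermitian) (hPSD : P.PosSemidef)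
    (s : ℝ) (hs : 0 ≤ s)
    (hbound : ∀ χ : Fin n → ℝ, (∀ i, 0 ≤ χ i) → ∑ i, (χ i) ^ 2 = 1 →
      (star (fun i => (χ i : ℂ)) ⬝ᵥ P.mulVec (fun i => (χ i : ℂ))).re ≤ s) :
    ∀ φ : Fin n → ℂ, ∑ i, ‖φ i‖ ^ 2 = 1 →
      (star φ ⬝ᵥ P.mulVec φ).re ≤ 4 * s :=
  complex_amplitude_soundness_general n P hPSD s hbound
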